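/- For all m >= 1 and k >= 0, the number of involutions of {0,1,...,m-1} with exactly k transpositions, all of whose transpositions (c,d) satisfy c+d ∈ J, equals the number of involutions of P|_m (the m smallest elements of P) with exactly k transpositions, all of whose transpositions (c,d) satisfy c+d ∈ L. -/
import Mathlib


/-- `P = {k : k ≡ 0 or 3 (mod 4)}`. -/
def Pset : Set ℕ := {k | k % 4 = 0 ∨ k % 4 = 3}

/-- `Q = {k : k ≡ 1 or 2 (mod 4)}`. -/
def Qset : Set ℕ := {k | k % 4 = 1 ∨ k % 4 = 2}

/-- `J = {(2n+1)·4^j − 1 : n, j ≥ 0}`. -/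
def Jset : Set ℕ := {m | ∃ n j : ℕ, (2 * n + 1) * 4 ^ j - 1 = m}

/-- `J* = {(2n+1)·4^j − 1 : n ≥ 0, j ≥ 1}`. -/
def Jstar : Set ℕ := {m | ∃ n j : ℕ, 1 ≤ j ∧ (2 * n + 1) * 4 ^ j - 1 = m}

/-- `L = ℕ \ J*`. -/
def Lset : Set ℕ := Jstarᶜ

/-- `A|_m`: the finite set of the `m` smallest elements of `A`. -/
noncomputable def smallest (A : Set ℕ) (m : ℕ) : Finset ℕ :=
  (Finset.range m).image (Nat.nth (· ∈ A))

/-- The map `β`: `β l = 2l` if `l` even, `2l + 1` if `l` odd. -/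
def beta (l : ℕ) : ℕ := if Even l then 2 * l else 2 * l + 1

/-- `μ(A, k, B)`: the number of involutions of the finite set `A` (permutations of `ℕ`
fixing everything outside `A` and equal to their own inverse) having exactly `k`
transpositions, all of whose transpositions `(c, d)` satisfy `c + d ∈ B`. -/
noncomputable def mu (A : Finset ℕ) (k : ℕ) (B : Set ℕ) : ℕ :=
  Nat.card {σ : Equiv.Perm ℕ // σ * σ = 1 ∧ (∀ x, σ x ≠ x → x ∈ A) ∧
    (A.filter fun x => σ x ≠ x).card = 2 * k ∧ ∀ c, σ c ≠ c → c + σ c ∈ B}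

lemma beta_eq (l : ℕ) : beta l = 2 * l + l % 2 := by
  unfold beta; split_ifs with h <;> rw [Nat.even_iff] at h <;> omega

lemma beta_mod (l : ℕ) : beta l % 4 = 0 ∨ beta l % 4 = 3 := by
  rw [beta_eq]
  rcases Nat.even_or_odd l with h | h
  · have h2 : l % 2 = 0 := Nat.even_iff.mp h
    omega
  · have h2 : l % 2 = 1 := Nat.odd_iff.mp h
    omega

lemma beta_div (l : ℕ) : beta l / 2 = l := by rw [beta_eq]; omega

lemma beta_inj : Function.Injective beta := fun a b h => by
  have := congrArg (· / 2) h; simpa [beta_div] using this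

lemma betaP {x : ℕ} (h : x % 4 = 0 ∨ x % 4 = 3) : beta (x / 2) = x := by
  rw [beta_eq]; omega

lemma mem_Pset (x : ℕ) : x ∈ Pset ↔ (x % 4 = 0 ∨ x % 4 = 3) := Iff.rfl

instance : DecidablePred (· ∈ Pset) := fun k =>
  inferInstanceAs (Decidable (k % 4 = 0 ∨ k % 4 = 3))

lemma count_beta (l : ℕ) : Nat.count (· ∈ Pset) (beta l) = l := by
  induction l with
  | zero => simp [beta]
  | succ n ih =>
    rcases Nat.even_or_odd n with h | h
    · have h2 : n % 2 = 0 := Nat.even_iff.mp h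
      have e1 : beta n = 2 * n := by rw [beta_eq]; omega
      have e2 : beta (n + 1) = (2 * n + 2) + 1 := by rw [beta_eq]; omega
      have m0 : (2*n) ∈ Pset := by rw [mem_Pset]; omega
      have m1 : ¬((2*n+1) ∈ Pset) := by rw [mem_Pset]; omega
      have m2 : ¬((2*n+2) ∈ Pset) := by rw [mem_Pset]; omega
      rw [e2, Nat.count_succ, show 2*n+2 = (2*n+1)+1 from rfl, Nat.count_succ,
          show 2*n+1 = (2*n)+1 from rfl, Nat.count_succ, if_pos m0, if_neg m1,
          if_neg m2, ← e1, ih]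
    · have h2 : n % 2 = 1 := Nat.odd_iff.mp h
      have e1 : beta n = 2 * n + 1 := by rw [beta_eq]; omega
      have e2 : beta (n + 1) = (2 * n + 1) + 1 := by rw [beta_eq]; omega
      have m1 : (2*n+1) ∈ Pset := by rw [mem_Pset]; omega
      rw [e2, Nat.count_succ, if_pos m1, ← e1, ih]

lemma beta_mem_Pset (l : ℕ) : beta l ∈ Pset := by rw [mem_Pset]; exact beta_mod l

lemma nth_Pset (l : ℕ) : Nat.nth (· ∈ Pset) l = beta l := by
  have h := Nat.nth_count (p := (· ∈ Pset)) (beta_mem_Pset l)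
  rwa [count_beta] at h

lemma smallest_Pset_eq (m : ℕ) : smallest Pset m = (Finset.range m).image beta := by
  unfold smallest
  exact Finset.image_congr fun x _ => nth_Pset x

lemma fact2_mul (n j : ℕ) : (((2 * n + 1) * 4 ^ j).factorization) 2 = 2 * j := by
  rw [show (4:ℕ) = 2 ^ 2 from rfl, ← pow_mul,
      Nat.factorization_mul (by omega) (by positivity)]
  simp [Nat.factorization_eq_zero_of_not_dvd (by omega : ¬ (2:ℕ) ∣ 2 * n + 1),
        Nat.Prime.factorization_pow Nat.prime_two]

lemma decomp (t : ℕ) (ht : t ≠ 0) : ∃ n, t = (2 * n + 1) * 2 ^ (t.factorization 2) := by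
  have h1 := Nat.ordProj_mul_ordCompl_eq_self t 2
  have h2 := Nat.not_dvd_ordCompl Nat.prime_two ht
  refine ⟨(t / 2 ^ (t.factorization 2)) / 2, ?_⟩
  have h3 : 2 * (t / 2 ^ (t.factorization 2) / 2) + 1 = t / 2 ^ (t.factorization 2) := by
    omega
  rw [h3, mul_comm]; exact h1.symm

lemma mem_J_iff (s : ℕ) : s ∈ Jset ↔ Even ((s + 1).factorization 2) := by
  constructor
  · rintro ⟨n, j, h⟩
    have hpos : 1 ≤ (2 * n + 1) * 4 ^ j := Nat.one_le_iff_ne_zero.mpr (by positivity)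
    have hs : s + 1 = (2 * n + 1) * 4 ^ j := by omega
    rw [hs, fact2_mul]; exact even_two_mul j
  · rintro ⟨j, hj⟩
    obtain ⟨n, hn⟩ := decomp (s + 1) (by omega)
    refine ⟨n, j, ?_⟩
    rw [show (4:ℕ) = 2 ^ 2 from rfl, ← pow_mul,
        show 2 * j = (s + 1).factorization 2 by omega, ← hn]
    omega

lemma mem_Jstar_iff (s : ℕ) :
    s ∈ Jstar ↔ Even ((s + 1).factorization 2) ∧ (s + 1).factorization 2 ≠ 0 := by
  constructor
  · rintro ⟨n, j, hj, h⟩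
    have hpos : 1 ≤ (2 * n + 1) * 4 ^ j := Nat.one_le_iff_ne_zero.mpr (by positivity)
    have hs : s + 1 = (2 * n + 1) * 4 ^ j := by omega
    rw [hs, fact2_mul]
    exact ⟨even_two_mul j, by omega⟩
  · rintro ⟨⟨j, hj⟩, hne⟩
    obtain ⟨n, hn⟩ := decomp (s + 1) (by omega)
    refine ⟨n, j, by omega, ?_⟩
    rw [show (4:ℕ) = 2 ^ 2 from rfl, ← pow_mul,
        show 2 * j = (s + 1).factorization 2 by omega, ← hn]
    omega

lemma key (c d : ℕ) : c + d ∈ Jset ↔ beta c + beta d ∈ Lset := by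
  have hb : beta c + beta d = 2 * (c + d) + (c % 2 + d % 2) := by
    rw [beta_eq, beta_eq]; omega
  rcases Nat.even_or_odd (c + d) with h | h
  · have h2 : (c + d) % 2 = 0 := Nat.even_iff.mp h
    constructor
    · intro _
      rw [Lset, Set.mem_compl_iff, mem_Jstar_iff]
      have hodd : ¬ (2:ℕ) ∣ (beta c + beta d + 1) := by omega
      rw [Nat.factorization_eq_zero_of_not_dvd hodd]
      simp
    · intro _
      exact ⟨(c + d) / 2, 0, by rw [pow_zero, mul_one]; omega⟩
  · have h2 : (c + d) % 2 = 1 := Nat.odd_iff.mp h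
    have hb2 : beta c + beta d + 1 = 2 * ((c + d) + 1) := by omega
    rw [mem_J_iff, Lset, Set.mem_compl_iff, mem_Jstar_iff, hb2,
        Nat.factorization_mul two_ne_zero (by omega),
        Nat.Prime.factorization Nat.prime_two]
    simp only [Finsupp.coe_add, Pi.add_apply, Finsupp.single_eq_same]
    rw [add_comm 1]
    simp [Nat.even_add_one]

lemma perm_sq (σ : Equiv.Perm ℕ) : σ * σ = 1 ↔ ∀ x, σ (σ x) = x := by
  rw [Equiv.ext_iff]; simp [Equiv.Perm.mul_apply]

def gmap (σ : Equiv.Perm ℕ) (x : ℕ) : ℕ :=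
  if x % 4 = 0 ∨ x % 4 = 3 then beta (σ (x / 2)) else x

lemma gmap_beta (σ : Equiv.Perm ℕ) (y : ℕ) : gmap σ (beta y) = beta (σ y) := by
  rw [gmap, if_pos (beta_mod y), beta_div]

lemma gmap_invol (σ : Equiv.Perm ℕ) (hσ : ∀ x, σ (σ x) = x) :
    Function.Involutive (gmap σ) := by
  intro x
  by_cases h : x % 4 = 0 ∨ x % 4 = 3
  · have e1 : gmap σ x = beta (σ (x / 2)) := by rw [gmap, if_pos h]
    rw [e1, gmap_beta, hσ, betaP h]
  · have e1 : gmap σ x = x := by rw [gmap, if_neg h]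
    rw [e1, e1]

lemma F_prop (m k : ℕ) (σ : Equiv.Perm ℕ)
    (h1 : σ * σ = 1) (h2 : ∀ x, σ x ≠ x → x ∈ Finset.range m)
    (h3 : ((Finset.range m).filter fun x => σ x ≠ x).card = 2 * k)
    (h4 : ∀ c, σ c ≠ c → c + σ c ∈ Jset)
    (τ : Equiv.Perm ℕ) (hτ : ∀ x, τ x = gmap σ x) :
    τ * τ = 1 ∧ (∀ x, τ x ≠ x → x ∈ (Finset.range m).image beta) ∧
      (((Finset.range m).image beta).filter fun x => τ x ≠ x).card = 2 * k ∧
      ∀ c, τ c ≠ c → c + τ c ∈ Lset := by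
  have hinv := gmap_invol σ ((perm_sq σ).mp h1)
  have hcond : ∀ x, τ x ≠ x → (x % 4 = 0 ∨ x % 4 = 3) := by
    intro x hx
    by_contra hc
    exact hx (by rw [hτ, gmap, if_neg hc])
  have hne : ∀ x, τ x ≠ x → σ (x / 2) ≠ x / 2 := by
    intro x hx he
    apply hx
    rw [hτ, gmap, if_pos (hcond x hx), he, betaP (hcond x hx)]
  refine ⟨?_, ?_, ?_, ?_⟩
  · rw [perm_sq]; intro x; rw [hτ, hτ]; exact hinv x
  · intro x hx
    rw [Finset.mem_image]
    exact ⟨x / 2, h2 _ (hne x hx), betaP (hcond x hx)⟩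
  · have himg : ((Finset.range m).image beta).filter (fun x => τ x ≠ x)
        = ((Finset.range m).filter fun x => σ x ≠ x).image beta := by
      ext x
      simp only [Finset.mem_filter, Finset.mem_image, Finset.mem_range]
      constructor
      · rintro ⟨⟨y, hy, rfl⟩, hne2⟩
        refine ⟨y, ⟨hy, fun hs => hne2 ?_⟩, rfl⟩
        rw [hτ, gmap_beta, hs]
      · rintro ⟨y, ⟨hy, hs⟩, rfl⟩
        refine ⟨⟨y, hy, rfl⟩, ?_⟩
        rw [hτ, gmap_beta]
        exact fun hh => hs (beta_inj hh)
    rw [himg, Finset.card_image_of_injective _ beta_inj, h3]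
  · intro c hc
    have h5 : c + τ c = beta (c / 2) + beta (σ (c / 2)) := by
      rw [hτ, gmap, if_pos (hcond c hc), betaP (hcond c hc)]
    rw [h5, ← key]
    exact h4 _ (hne c hc)

lemma main_bij (m k : ℕ) :
    Nat.card {σ : Equiv.Perm ℕ // σ * σ = 1 ∧ (∀ x, σ x ≠ x → x ∈ Finset.range m) ∧
      ((Finset.range m).filter fun x => σ x ≠ x).card = 2 * k ∧
      ∀ c, σ c ≠ c → c + σ c ∈ Jset}
    = Nat.card {σ : Equiv.Perm ℕ // σ * σ = 1 ∧
      (∀ x, σ x ≠ x → x ∈ (Finset.range m).image beta) ∧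
      (((Finset.range m).image beta).filter fun x => σ x ≠ x).card = 2 * k ∧
      ∀ c, σ c ≠ c → c + σ c ∈ Lset} := by
  apply Nat.card_eq_of_bijective
    (fun s => ⟨Function.Involutive.toPerm _ (gmap_invol s.1 ((perm_sq s.1).mp s.2.1)),
      F_prop m k s.1 s.2.1 s.2.2.1 s.2.2.2.1 s.2.2.2.2 _ (fun x => rfl)⟩)
  constructor
  · rintro ⟨σ1, p1⟩ ⟨σ2, p2⟩ h
    apply Subtype.ext
    apply Equiv.ext
    intro x
    have h' : gmap σ1 (beta x) = gmap σ2 (beta x) := by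
      have := congrArg (fun u => u.1 (beta x)) h
      simpa [Function.Involutive.toPerm] using this
    rw [gmap_beta, gmap_beta] at h'
    exact beta_inj h'
  · rintro ⟨τ, t1, t2, t3, t4⟩
    have ht1 : ∀ x, τ (τ x) = x := (perm_sq τ).mp t1
    have fA : ∀ y, y < m → ∃ z, z < m ∧ beta z = τ (beta y) := by
      intro y hy
      by_cases hE : τ (beta y) = beta y
      · exact ⟨y, hy, hE.symm⟩
      · have hw : τ (τ (beta y)) ≠ τ (beta y) := by
          rw [ht1]; exact fun hh => hE hh.symm
        obtain ⟨z, hz, hze⟩ := Finset.mem_image.mp (t2 _ hw)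
        exact ⟨z, Finset.mem_range.mp hz, hze⟩
    set f : ℕ → ℕ := fun x => if x < m then τ (beta x) / 2 else x with hfdef
    have hf1 : ∀ y, y < m → beta (f y) = τ (beta y) ∧ f y < m := by
      intro y hy
      obtain ⟨z, hz, hze⟩ := fA y hy
      have hfz : f y = z := by
        simp only [hfdef, if_pos hy, ← hze, beta_div]
      rw [hfz]; exact ⟨hze, hz⟩
    have hffix : ∀ x, ¬ x < m → f x = x := fun x hx => by
      simp only [hfdef, if_neg hx]
    have hinv : Function.Involutive f := by
      intro x
      by_cases hx : x < m
      · obtain ⟨he, hlt⟩ := hf1 x hx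
        obtain ⟨he2, _⟩ := hf1 _ hlt
        apply beta_inj
        rw [he2, he, ht1]
      · rw [hffix x hx, hffix x hx]
    set σ : Equiv.Perm ℕ := Function.Involutive.toPerm f hinv with hσdef
    have hσapp : ∀ x, σ x = f x := fun x => rfl
    have p2 : ∀ x, σ x ≠ x → x ∈ Finset.range m := by
      intro x hx
      rw [Finset.mem_range]
      by_contra hc
      exact hx (by rw [hσapp, hffix x hc])
    have himg : ((Finset.range m).image beta).filter (fun x => τ x ≠ x)
        = ((Finset.range m).filter fun x => σ x ≠ x).image beta := by
      ext x
      simp only [Finset.mem_filter, Finset.mem_image, Finset.mem_range]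
      constructor
      · rintro ⟨⟨y, hy, rfl⟩, hne2⟩
        refine ⟨y, ⟨hy, fun hs => hne2 ?_⟩, rfl⟩
        rw [← (hf1 y hy).1, ← hσapp, hs]
      · rintro ⟨y, ⟨hy, hs⟩, rfl⟩
        refine ⟨⟨y, hy, rfl⟩, fun he => hs ?_⟩
        rw [hσapp]
        exact beta_inj (((hf1 y hy).1).trans he)
    have p3 : ((Finset.range m).filter fun x => σ x ≠ x).card = 2 * k := by
      rw [himg, Finset.card_image_of_injective _ beta_inj] at t3
      exact t3
    have p4 : ∀ c, σ c ≠ c → c + σ c ∈ Jset := by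
      intro c hc
      have hcm : c < m := Finset.mem_range.mp (p2 c hc)
      rw [key, hσapp, (hf1 c hcm).1]
      apply t4
      intro he
      apply hc
      rw [hσapp]
      exact beta_inj (((hf1 c hcm).1).trans he)
    refine ⟨⟨σ, (perm_sq σ).mpr (fun x => hinv x), p2, p3, p4⟩, ?_⟩
    apply Subtype.ext
    apply Equiv.ext
    intro x
    show gmap σ x = τ x
    by_cases hcond : x % 4 = 0 ∨ x % 4 = 3
    · have hxy : beta (x / 2) = x := betaP hcond
      by_cases hym : x / 2 < m
      · rw [gmap, if_pos hcond, hσapp, (hf1 _ hym).1, hxy]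
      · rw [gmap, if_pos hcond, hσapp, hffix _ hym, hxy]
        by_contra hτx
        have := t2 x (fun hh => hτx hh.symm)
        obtain ⟨z, hz, hze⟩ := Finset.mem_image.mp this
        have hzx : z = x / 2 := beta_inj (by rw [hze, hxy])
        exact hym (hzx ▸ Finset.mem_range.mp hz)
    · rw [gmap, if_neg hcond]
      by_contra hτx
      have := t2 x (fun hh => hτx hh.symm)
      obtain ⟨z, hz, hze⟩ := Finset.mem_image.mp this
      exact hcond (hze ▸ beta_mod z)

theorem stmt_9 (m k : ℕ) (hm : 1 ≤ m) :
    mu (Finset.range m) k Jset = mu (smallest Pset m) k Lset := by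
  rw [smallest_Pset_eq]
  unfold mu
  exact main_bij m k
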